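/- arXiv:0704.2597 — 8 statements merged into one kernel-verified Lean document; each statement's English description precedes it below -/
import Mathlib

section
/- A state ρ on ℂ^M ⊗ ℂ^N is separable if and only if there exist a natural number K, vectors v_1, …, v_N ∈ ℂ^K and diagonal K×K complex matrices D_1, …, D_M such that ρ_{(i,j),(m,n)} = ⟨D_i v_j, D_m v_n⟩ for all i, m ∈ {1,…,M} and j, n ∈ {1,…,N}. -/
open Matrix Kronecker BigOperators ComplexConjugate
open scoped ComplexOrder

noncomputable section

/-- The rank-one outer product `u u†`. -/
def outer {ι : Type*} (u : ι → ℂ) : Matrix ι ι ℂ := Matrix.vecMulVec u (star u)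

/-- A bipartite state is `K`-separable if it is a sum of exactly `K` Kronecker
products of rank-one positive operators. -/
def IsKSep (M N K : ℕ) (ρ : Matrix (Fin M × Fin N) (Fin M × Fin N) ℂ) : Prop :=
  ∃ (x : Fin K → Fin M → ℂ) (y : Fin K → Fin N → ℂ),
    ρ = ∑ k : Fin K, (outer (x k)) ⊗ₖ (outer (y k))

/-- A bipartite state is separable if it is `K`-separable for some `K`. -/
def IsSep (M N : ℕ) (ρ : Matrix (Fin M × Fin N) (Fin M × Fin N) ℂ) : Prop :=
  ∃ K : ℕ, IsKSep M N K ρ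

/-- A state ρ on ℂ^M ⊗ ℂ^N is separable iff there exist `K`, vectors
`v₁, …, v_N ∈ ℂ^K` and diagonal `K×K` matrices `D₁, …, D_M` with
`ρ_{(i,j),(m,n)} = ⟨D_i v_j, D_m v_n⟩`. -/
theorem separable_iff_gram_diagonal (M N : ℕ)
    (ρ : Matrix (Fin M × Fin N) (Fin M × Fin N) ℂ) (hρ : ρ.PosSemidef) :
    IsSep M N ρ ↔
      ∃ (K : ℕ) (v : Fin N → Fin K → ℂ) (d : Fin M → Fin K → ℂ),
        ∀ (i m : Fin M) (j n : Fin N),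
          ρ (i, j) (m, n) =
            star ((Matrix.diagonal (d i)).mulVec (v j)) ⬝ᵥ
              (Matrix.diagonal (d m)).mulVec (v n) := by
  have key : ∀ (K : ℕ) (x : Fin K → Fin M → ℂ) (y : Fin K → Fin N → ℂ)
      (i m : Fin M) (j n : Fin N),
      (∑ k : Fin K, (outer (x k)) ⊗ₖ (outer (y k))) (i, j) (m, n) =
        star ((Matrix.diagonal (fun k => star (x k i))).mulVec
            (fun k => star (y k j))) ⬝ᵥ
          (Matrix.diagonal (fun k => star (x k m))).mulVec (fun k => star (y k n)) := by
    intro K x y i m j n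
    simp [Matrix.sum_apply, outer, Matrix.vecMulVec_apply, dotProduct,
      Matrix.mulVec_diagonal, mul_comm, mul_left_comm, mul_assoc]
  constructor
  · rintro ⟨K, x, y, rfl⟩
    exact ⟨K, fun j k => star (y k j), fun i k => star (x k i),
      fun i m j n => key K x y i m j n⟩
  · rintro ⟨K, v, d, h⟩
    refine ⟨K, fun k i => star (d i k), fun k j => star (v j k), ?_⟩
    ext ⟨i, j⟩ ⟨m, n⟩
    rw [h i m j n, key]
    simp
end
end

section
/- Let ρ be a state on ℂ^M ⊗ ℂ^N such that the matrix entries satisfy ρ_{(i,j),(m,n)} = ⟨D_i v_j, D_m v_n⟩ for diagonal K×K complex matrices D_1, …, D_M and vectors v_1, …, v_N ∈ ℂ^K. Then ρ = Σ_{l=1}^K |φ_l ⊗ ψ_l⟩⟨φ_l ⊗ ψ_l|, where φ_l ∈ ℂ^M has components (φ_l)_m = conj((D_m)_{ll}) and ψ_l ∈ ℂ^N has components (ψ_l)_n = conj((v_n)_l); in particular ρ is K-separable. -/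
open Matrix Kronecker BigOperators ComplexConjugate
open scoped ComplexOrder

noncomputable section

/-- If the entries of a state ρ have the Gram form ⟨D_i v_j, D_m v_n⟩ with the
D's diagonal, then ρ decomposes into K rank-one product projectors built from
the conjugated diagonal entries and vector components; in particular ρ is
K-separable. -/
theorem gram_diagonal_decomposition (M N K : ℕ)
    (ρ : Matrix (Fin M × Fin N) (Fin M × Fin N) ℂ) (hρ : ρ.PosSemidef)
    (v : Fin N → Fin K → ℂ) (d : Fin M → Fin K → ℂ)
    (h : ∀ (i m : Fin M) (j n : Fin N),
      ρ (i, j) (m, n) =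
        star ((Matrix.diagonal (d i)).mulVec (v j)) ⬝ᵥ
          (Matrix.diagonal (d m)).mulVec (v n))
    (φ : Fin K → Fin M → ℂ) (ψ : Fin K → Fin N → ℂ)
    (hφ : ∀ l m, φ l m = conj (d m l))
    (hψ : ∀ l n, ψ l n = conj (v n l)) :
    ρ = ∑ l : Fin K, outer (fun p : Fin M × Fin N => φ l p.1 * ψ l p.2) ∧
      IsKSep M N K ρ := by
  have key : ρ = ∑ l : Fin K, outer (fun p : Fin M × Fin N => φ l p.1 * ψ l p.2) := by
    ext ⟨i, j⟩ ⟨m, n⟩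
    rw [h i m j n]
    simp only [Matrix.sum_apply, outer, Matrix.vecMulVec_apply, Pi.star_apply,
      dotProduct, Matrix.mulVec_diagonal, star_mul', hφ, hψ]
    apply Finset.sum_congr rfl
    intro l _
    simp [mul_comm, mul_left_comm, mul_assoc]
  refine ⟨key, fun l i => φ l i, fun l j => ψ l j, ?_⟩
  rw [key]
  apply Finset.sum_congr rfl
  intro l _
  ext ⟨i, j⟩ ⟨m, n⟩
  simp only [outer, Matrix.kroneckerMap_apply, Matrix.vecMulVec_apply, Pi.star_apply, star_mul']
  ring
end
end

section
/- Let ρ be a state on ℂ^M ⊗ ℂ^N of rank r, let w_{mn} ∈ ℂ^r and w'_{mn} ∈ ℂ^K (K ≥ r) be two Gram systems for ρ, i.e. ρ_{(i,j),(m,n)} = ⟨w_{ij}, w_{mn}⟩ = ⟨w'_{ij}, w'_{mn}⟩ for all indices. Suppose v_1, …, v_N ∈ ℂ^r and v'_1, …, v'_N ∈ ℂ^K are each linearly independent, and F_m : ℂ^r → ℂ^r, F'_m : ℂ^K → ℂ^K are linear maps with w_{mn} = F_m v_n and w'_{mn} = F'_m v'_n for all m, n. Then there exist K×r complex matrices Ṽ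 of rank r and V with V†V = I_r such that V† F'_m Ṽ v_n = F_m v_n for all m ∈ {1,…,M} and n ∈ {1,…,N}. -/
/-!
Stack the two Gram systems as the columns of matrices `W : r × MN` and `W' : K × MN`. Then
`Wᴴ W = W'ᴴ W' = ρ`, and `rank ρ = r` makes `G = W Wᴴ` invertible. Since `P = Wᴴ G⁻¹ W`
fixes the rows of `W`, and `W'` has the same Gram matrix, `W' P = W'` as well; hence
`V = W' Wᴴ G⁻¹` is an isometry with `V W = W'`, i.e. `Vᴴ w'_{mn} = w_{mn}`. Finally `Ṽ` is any
injective linear map sending each `v_n` to `v'_n`, which exists because `r ≤ K`.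
-/

open Matrix Kronecker BigOperators ComplexConjugate
open scoped ComplexOrder

noncomputable section

theorem LinearIndependent.exists_injective_linearMap_apply_eq {K E E' ι : Type*} [Field K]
    [AddCommGroup E] [Module K E] [FiniteDimensional K E]
    [AddCommGroup E'] [Module K E'] [FiniteDimensional K E']
    {v : ι → E} {v' : ι → E'} (hv : LinearIndependent K v) (hv' : LinearIndependent K v')
    (h : Module.finrank K E ≤ Module.finrank K E') :
    ∃ T : E →ₗ[K] E', Function.Injective T ∧ ∀ i, T (v i) = v' i := by
  set S := Submodule.span K (Set.range v)
  set S' := Submodule.span K (Set.range v')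
  let e : S ≃ₗ[K] S' := (Module.Basis.span hv).equiv (Module.Basis.span hv') (Equiv.refl ι)
  obtain ⟨C, hC⟩ := S.exists_isCompl
  obtain ⟨C', hC'⟩ := S'.exists_isCompl
  obtain ⟨g, hg⟩ : ∃ g : C →ₗ[K] C', Function.Injective g := by
    rw [← finrank_le_iff_exists_linearMap]
    have := Submodule.finrank_add_eq_of_isCompl hC
    have := Submodule.finrank_add_eq_of_isCompl hC'
    have := e.finrank_eq
    omega
  refine ⟨(S'.prodEquivOfIsCompl C' hC').toLinearMap ∘ₗ (e.toLinearMap.prodMap g) ∘ₗ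
    (S.prodEquivOfIsCompl C hC).symm.toLinearMap, ?_, fun i => ?_⟩
  · simp only [LinearMap.coe_comp, LinearEquiv.coe_coe, LinearMap.coe_prodMap]
    exact (LinearEquiv.injective _).comp ((e.injective.prodMap hg).comp (LinearEquiv.injective _))
  · have hv_span : v i = (Module.Basis.span hv i : E) := by rw [Module.Basis.span_apply]
    simp only [LinearMap.coe_comp, LinearEquiv.coe_coe, Function.comp_apply]
    rw [hv_span, S.prodEquivOfIsCompl_symm_apply_left C hC, LinearMap.prodMap_apply, map_zero,
      LinearEquiv.coe_coe, Module.Basis.equiv_apply, Submodule.coe_prodEquivOfIsCompl',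
      Submodule.coe_zero, add_zero, Equiv.refl_apply, Module.Basis.span_apply]

section Gram

variable {𝕜 : Type*} {m m' n l : Type*} [Fintype m] [Fintype m'] [Fintype n]

theorem Matrix.isUnit_of_rank_eq_card [Field 𝕜] [DecidableEq m] {A : Matrix m m 𝕜}
    (h : A.rank = Fintype.card m) : IsUnit A := by
  refine mulVec_surjective_iff_isUnit.mp fun y => ?_
  have : LinearMap.range A.mulVecLin = ⊤ :=
    Submodule.eq_top_of_finrank_eq (by rw [Module.finrank_fintype_fun_eq_card]; exact h)
  exact LinearMap.range_eq_top.mp this y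

variable [Field 𝕜] [PartialOrder 𝕜] [StarRing 𝕜] [StarOrderedRing 𝕜]

theorem Matrix.mul_eq_zero_of_conjTranspose_mul_self_eq {W : Matrix m n 𝕜} {W' : Matrix m' n 𝕜}
    (hW : W'ᴴ * W' = Wᴴ * W) {D : Matrix n l 𝕜} (hD : W * D = 0) : W' * D = 0 := by
  rw [← conjTranspose_mul_self_eq_zero]
  calc (W' * D)ᴴ * (W' * D) = Dᴴ * (W'ᴴ * W') * D := by
        simp only [conjTranspose_mul, Matrix.mul_assoc]
    _ = (W * D)ᴴ * (W * D) := by rw [hW]; simp only [conjTranspose_mul, Matrix.mul_assoc]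
    _ = 0 := by rw [hD, Matrix.mul_zero]

theorem Matrix.exists_isometry_mul_eq_of_conjTranspose_mul_self_eq [DecidableEq m] [DecidableEq n]
    {W : Matrix m n 𝕜} {W' : Matrix m' n 𝕜} (hW : W'ᴴ * W' = Wᴴ * W)
    (hrank : W.rank = Fintype.card m) :
    ∃ V : Matrix m' m 𝕜, Vᴴ * V = 1 ∧ V * W = W' := by
  set G := W * Wᴴ
  have hG : IsUnit G.det := (isUnit_iff_isUnit_det G).mp <|
    isUnit_of_rank_eq_card (by rw [rank_self_mul_conjTranspose, hrank])
  have hGG : G * G⁻¹ = 1 := mul_nonsing_inv G hG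
  have hGH : G⁻¹ᴴ = G⁻¹ := by
    rw [conjTranspose_nonsing_inv, conjTranspose_mul, conjTranspose_conjTranspose]
  have hWP : W * (Wᴴ * G⁻¹ * W) = W := by
    rw [← Matrix.mul_assoc, ← Matrix.mul_assoc, hGG, Matrix.one_mul]
  have hW'P : W' * (Wᴴ * G⁻¹ * W) = W' := by
    have := mul_eq_zero_of_conjTranspose_mul_self_eq hW (D := 1 - Wᴴ * G⁻¹ * W)
      (by rw [Matrix.mul_sub, Matrix.mul_one, hWP, sub_self])
    rwa [Matrix.mul_sub, Matrix.mul_one, sub_eq_zero, eq_comm] at this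
  refine ⟨W' * Wᴴ * G⁻¹, ?_, by simpa only [Matrix.mul_assoc] using hW'P⟩
  calc (W' * Wᴴ * G⁻¹)ᴴ * (W' * Wᴴ * G⁻¹) = G⁻¹ * W * (W'ᴴ * W') * Wᴴ * G⁻¹ := by
        simp only [conjTranspose_mul, conjTranspose_conjTranspose, hGH, Matrix.mul_assoc]
    _ = G⁻¹ * G * (G * G⁻¹) := by rw [hW]; simp only [G, Matrix.mul_assoc]
    _ = 1 := by rw [nonsing_inv_mul G hG, hGG, Matrix.one_mul]

end Gram

theorem gram_systems_related_general (M N r K : ℕ) (hK : r ≤ K)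
    (ρ : Matrix (Fin M × Fin N) (Fin M × Fin N) ℂ)
    (hrank : ρ.rank = r)
    (w : Fin M → Fin N → Fin r → ℂ) (w' : Fin M → Fin N → Fin K → ℂ)
    (hgram : ∀ (i m : Fin M) (j n : Fin N),
      ρ (i, j) (m, n) = star (w i j) ⬝ᵥ w m n)
    (hgram' : ∀ (i m : Fin M) (j n : Fin N),
      ρ (i, j) (m, n) = star (w' i j) ⬝ᵥ w' m n)
    (v : Fin N → Fin r → ℂ) (hv : LinearIndependent ℂ v)
    (v' : Fin N → Fin K → ℂ) (hv' : LinearIndependent ℂ v')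
    (F : Fin M → Matrix (Fin r) (Fin r) ℂ)
    (F' : Fin M → Matrix (Fin K) (Fin K) ℂ)
    (hF : ∀ m n, w m n = (F m).mulVec (v n))
    (hF' : ∀ m n, w' m n = (F' m).mulVec (v' n)) :
    ∃ (Vt V : Matrix (Fin K) (Fin r) ℂ),
      Vt.rank = r ∧ Vᴴ * V = 1 ∧
      ∀ (m : Fin M) (n : Fin N),
        (Vᴴ * F' m * Vt).mulVec (v n) = (F m).mulVec (v n) := by
  let W : Matrix (Fin r) (Fin M × Fin N) ℂ := of fun i p => w p.1 p.2 i
  let W' : Matrix (Fin K) (Fin M × Fin N) ℂ := of fun i p => w' p.1 p.2 i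
  have hWρ : Wᴴ * W = ρ := by ext p q; simp [W, hgram, mul_apply, dotProduct]
  have hW'ρ : W'ᴴ * W' = ρ := by ext p q; simp [W', hgram', mul_apply, dotProduct]
  obtain ⟨V, hV, hVW⟩ := Matrix.exists_isometry_mul_eq_of_conjTranspose_mul_self_eq
    (hW'ρ.trans hWρ.symm) (by rw [← rank_conjTranspose_mul_self, hWρ, hrank, Fintype.card_fin])
  have hVw (m : Fin M) (n : Fin N) : Vᴴ *ᵥ w' m n = w m n := by
    have : V *ᵥ w m n = w' m n := by
      funext i; simpa [W, W', mul_apply, mulVec, dotProduct] using congrFun (congrFun hVW i) (m, n)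
    rw [← this, mulVec_mulVec, hV, one_mulVec]
  obtain ⟨T, hT, hTv⟩ := hv.exists_injective_linearMap_apply_eq hv' (by simpa using hK)
  refine ⟨LinearMap.toMatrix' T, V, ?_, hV, fun m n => ?_⟩
  · show Module.finrank ℂ (LinearMap.range (toLin' (LinearMap.toMatrix' T))) = r
    rw [toLin'_toMatrix', LinearMap.finrank_range_of_inj hT, Module.finrank_fin_fun]
  · rw [← mulVec_mulVec, ← mulVec_mulVec, LinearMap.toMatrix'_mulVec, hTv, ← hF', hVw, hF]

/-- Theorem 1: given two Gram systems for the same state ρ of rank r, one in ℂ^r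
and one in ℂ^K (K ≥ r), factorised as w_{mn} = F_m v_n and w'_{mn} = F'_m v'_n
with the v's and v''s linearly independent, there exist a K×r matrix Ṽ of rank r
and a K×r matrix V with V†V = 1 such that V† F'_m Ṽ v_n = F_m v_n for all m, n. -/
theorem gram_systems_related (M N r K : ℕ) (hK : r ≤ K)
    (ρ : Matrix (Fin M × Fin N) (Fin M × Fin N) ℂ) (hρ : ρ.PosSemidef)
    (hrank : ρ.rank = r)
    (w : Fin M → Fin N → Fin r → ℂ) (w' : Fin M → Fin N → Fin K → ℂ)
    (hgram : ∀ (i m : Fin M) (j n : Fin N),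
      ρ (i, j) (m, n) = star (w i j) ⬝ᵥ w m n)
    (hgram' : ∀ (i m : Fin M) (j n : Fin N),
      ρ (i, j) (m, n) = star (w' i j) ⬝ᵥ w' m n)
    (v : Fin N → Fin r → ℂ) (hv : LinearIndependent ℂ v)
    (v' : Fin N → Fin K → ℂ) (hv' : LinearIndependent ℂ v')
    (F : Fin M → Matrix (Fin r) (Fin r) ℂ)
    (F' : Fin M → Matrix (Fin K) (Fin K) ℂ)
    (hF : ∀ m n, w m n = (F m).mulVec (v n))
    (hF' : ∀ m n, w' m n = (F' m).mulVec (v' n)) :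
    ∃ (Vt V : Matrix (Fin K) (Fin r) ℂ),
      Vt.rank = r ∧ Vᴴ * V = 1 ∧
      ∀ (m : Fin M) (n : Fin N),
        (Vᴴ * F' m * Vt).mulVec (v n) = (F m).mulVec (v n) :=
  gram_systems_related_general M N r K hK ρ hrank w w' hgram hgram' v hv v' hv' F F' hF hF'
end
end

section
/- Let ρ be a matrix indexed by (Fin M × Fin N) whose entries satisfy ρ_{(i,j),(m,n)} = ⟨D_i v_j, D_m v_n⟩ for diagonal K×K complex matrices D_1, …, D_M and vectors v_1, …, v_N ∈ ℂ^K. Then the partial transposes of ρ satisfy (ρ^{T_B})_{(i,j),(m,n)} = ⟨D_i conj(v_j), D_m conj(v_n)⟩ and (ρ^{T_A})_{(i,j),(m,n)} = ⟨conj(D_i) v_j, conj(D_m) v_n⟩, where conj denotes entrywise complex conjugation. -/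
open Matrix BigOperators ComplexConjugate
open scoped ComplexOrder

noncomputable section

/-- The partial transpose with respect to the second (B) factor:
(ρ^{T_B})_{(i,j),(m,n)} = ρ_{(i,n),(m,j)}. -/
def PTb {M N : ℕ} (ρ : Matrix (Fin M × Fin N) (Fin M × Fin N) ℂ) :
    Matrix (Fin M × Fin N) (Fin M × Fin N) ℂ :=
  Matrix.of fun p q => ρ (p.1, q.2) (q.1, p.2)

/-- The partial transpose with respect to the first (A) factor:
(ρ^{T_A})_{(i,j),(m,n)} = ρ_{(m,j),(i,n)}. -/
def PTa {M N : ℕ} (ρ : Matrix (Fin M × Fin N) (Fin M × Fin N) ℂ) :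
    Matrix (Fin M × Fin N) (Fin M × Fin N) ℂ :=
  Matrix.of fun p q => ρ (q.1, p.2) (p.1, q.2)

/-- If ρ_{(i,j),(m,n)} = ⟨D_i v_j, D_m v_n⟩ with the D's diagonal, then the
partial transpose in B corresponds to conjugating the frame v, and the partial
transpose in A corresponds to conjugating the diagonal matrices. -/
theorem partial_transpose_gram_diagonal (M N K : ℕ)
    (ρ : Matrix (Fin M × Fin N) (Fin M × Fin N) ℂ)
    (v : Fin N → Fin K → ℂ) (d : Fin M → Fin K → ℂ)
    (h : ∀ (i m : Fin M) (j n : Fin N),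
      ρ (i, j) (m, n) =
        star ((Matrix.diagonal (d i)).mulVec (v j)) ⬝ᵥ
          (Matrix.diagonal (d m)).mulVec (v n)) :
    (∀ (i m : Fin M) (j n : Fin N),
      PTb ρ (i, j) (m, n) =
        star ((Matrix.diagonal (d i)).mulVec (star (v j))) ⬝ᵥ
          (Matrix.diagonal (d m)).mulVec (star (v n))) ∧
    (∀ (i m : Fin M) (j n : Fin N),
      PTa ρ (i, j) (m, n) =
        star ((Matrix.diagonal (star (d i))).mulVec (v j)) ⬝ᵥ
          (Matrix.diagonal (star (d m))).mulVec (v n)) := by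
  constructor <;> intro i m j n <;>
    simp only [PTb, PTa, Matrix.of_apply, h, dotProduct, Pi.star_apply,
      Matrix.mulVec_diagonal, star_mul', star_star] <;>
    refine Finset.sum_congr rfl fun k _ => ?_ <;> ring
end
end

section
/- Let B be an N×N complex matrix and let ρ be the positive semidefinite matrix on ℂ² ⊗ ℂ^N given in block form by ρ = [[B B†, B],[B†, I_N]] (a 2×N state of rank N in canonical form). Then the partial transpose ρ^{T_A} = [[B B†, B†],[B, I_N]] is positive semidefinite if and only if B is normal (B B† = B† B), and in that case ρ is N-separable. -/
/-!
`ρ^{T_A} = [[B B†, B†], [B, I]]` is positive semidefinite iff its Schur complement `B B† - B† B`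
is. That matrix has trace zero, so it is positive semidefinite iff it vanishes, i.e. iff `B` is
normal. A normal `B` is unitarily diagonalizable, `B = U diag(λ) U†`, by simultaneously
diagonalizing its commuting Hermitian real and imaginary parts. Then every block of `ρ` has the
form `U diag(·) U†`, which gives `ρ = Σ_k |(λ_k, 1)⟩⟨(λ_k, 1)| ⊗ |u_k⟩⟨u_k|` with `u_k` the columns
of `U`.
-/

open Matrix Kronecker BigOperators ComplexConjugate
open scoped ComplexOrder

noncomputable section

/-- Identification of `Fin 2 × Fin N` with `Fin N ⊕ Fin N`, used to write a
2×N state in 2×2 block form with N×N blocks. -/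
def blockIdx (N : ℕ) : Fin 2 × Fin N → Fin N ⊕ Fin N :=
  fun p => if p.1 = 0 then Sum.inl p.2 else Sum.inr p.2

open Unitary Module.End
open scoped ComplexStarModule

theorem LinearMap.IsSymmetric.exists_orthonormalBasis_common_eigenvectors
    {𝕜 E ι : Type*} [RCLike 𝕜] [NormedAddCommGroup E] [InnerProductSpace 𝕜 E]
    [FiniteDimensional 𝕜 E] [Fintype ι] {S T : E →ₗ[𝕜] E} (hS : S.IsSymmetric)
    (hT : T.IsSymmetric) (hST : Commute S T) (hι : Module.finrank 𝕜 E = Fintype.card ι) :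
    ∃ (b : OrthonormalBasis ι 𝕜 E) (μ ν : ι → 𝕜),
      ∀ i, S (b i) = μ i • b i ∧ T (b i) = ν i • b i := by
  classical
  let V (χ : 𝕜 × 𝕜) := eigenspace S χ.2 ⊓ eigenspace T χ.1
  have hV₀ : DirectSum.IsInternal V := hS.directSum_isInternal_of_commute hT hST
  -- only finitely many joint eigenspaces are nonzero, so index the decomposition by those
  have := hV₀.submodule_iSupIndep.fintypeNeBotOfFiniteDimensional
  have hV := DirectSum.isInternal_ne_bot_iff.mpr hV₀
  have hV' := (hS.orthogonalFamily_eigenspace_inf_eigenspace hT).comp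
    (Subtype.val_injective (p := fun χ => V χ ≠ ⊥))
  let e := Fintype.equivFinOfCardEq hι.symm
  let eigenvalue (i : ι) := hV.subordinateOrthonormalBasisIndex rfl (e i) hV'
  refine ⟨(hV.subordinateOrthonormalBasis rfl hV').reindex e.symm, fun i => (eigenvalue i).1.2,
    fun i => (eigenvalue i).1.1, fun i => ?_⟩
  have hmem := hV.subordinateOrthonormalBasis_subordinate rfl (e i) hV'
  simpa only [OrthonormalBasis.reindex_apply, Equiv.symm_symm] using
    And.imp mem_eigenspace_iff.mp mem_eigenspace_iff.mp hmem

namespace Matrix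

variable {𝕜 n : Type*} [RCLike 𝕜] [Fintype n]

theorem exists_unitary_eq_conj_diagonal_of_orthonormalBasis [DecidableEq n] {A : Matrix n n 𝕜}
    (b : OrthonormalBasis n 𝕜 (EuclideanSpace 𝕜 n)) (d : n → 𝕜)
    (hb : ∀ j, A *ᵥ ⇑(b j) = d j • ⇑(b j)) :
    ∃ U : unitaryGroup n 𝕜, A = conjStarAlgAut 𝕜 _ U (diagonal d) := by
  let U : unitaryGroup n 𝕜 := ⟨(EuclideanSpace.basisFun n 𝕜).toBasis.toMatrix b.toBasis,
    (EuclideanSpace.basisFun n 𝕜).toMatrix_orthonormalBasis_mem_unitary b⟩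
  have hU (i j : n) : (U : Matrix n n 𝕜) i j = b j i := rfl
  have hAU : A * U = U * diagonal d := by
    ext i j
    rw [mul_diagonal]
    simpa [mul_apply, mulVec, dotProduct, hU, mul_comm] using congrFun (hb j) i
  refine ⟨U, ?_⟩
  rw [conjStarAlgAut_apply, ← hAU, mul_assoc, Unitary.mul_star_self_of_mem U.2, mul_one]

theorem exists_unitary_eq_conj_diagonal_of_isStarNormal [DecidableEq n] {B : Matrix n n ℂ}
    (hB : IsStarNormal B) :
    ∃ (U : unitaryGroup n ℂ) (d : n → ℂ), B = conjStarAlgAut ℂ _ U (diagonal d) := by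
  have hsymm (X : selfAdjoint (Matrix n n ℂ)) : (toEuclideanLin (X : Matrix n n ℂ)).IsSymmetric :=
    isSymmetric_toEuclideanLin_iff.mpr X.2
  obtain ⟨b, μ, ν, hb⟩ := (hsymm (ℜ B)).exists_orthonormalBasis_common_eigenvectors (hsymm (ℑ B))
    ((Commute.realPart_imaginaryPart B).map (toLpLinAlgEquiv 2)) finrank_euclideanSpace
  obtain ⟨U, hU⟩ := exists_unitary_eq_conj_diagonal_of_orthonormalBasis b (μ + Complex.I • ν)
    fun j => by
      have hre := congrArg WithLp.ofLp (hb j).1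
      have him := congrArg WithLp.ofLp (hb j).2
      simp only [toLpLin_apply] at hre him
      calc B *ᵥ b j = ((ℜ B : Matrix n n ℂ) + Complex.I • (ℑ B : Matrix n n ℂ)) *ᵥ b j := by
            rw [realPart_add_I_smul_imaginaryPart]
        _ = _ := by simp [add_mulVec, smul_mulVec, hre, him, add_smul, smul_smul]
  exact ⟨U, _, hU⟩

theorem posSemidef_mul_conjTranspose_sub_conjTranspose_mul_iff (B : Matrix n n 𝕜) :
    (B * Bᴴ - Bᴴ * B).PosSemidef ↔ B * Bᴴ = Bᴴ * B := by
  refine ⟨fun h => sub_eq_zero.mp (h.trace_eq_zero_iff.mp ?_), fun h => ?_⟩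
  · rw [trace_sub, trace_mul_comm, sub_self]
  · rw [h, sub_self]
    exact .zero

theorem posSemidef_fromBlocks_mul_conjTranspose_iff [DecidableEq n] (B : Matrix n n 𝕜) :
    (fromBlocks (B * Bᴴ) Bᴴ B 1).PosSemidef ↔ B * Bᴴ = Bᴴ * B := by
  let : Invertible (1 : Matrix n n 𝕜) := invertibleOne
  have := PosDef.fromBlocks₂₂ (B * Bᴴ) Bᴴ PosDef.one
  rw [conjTranspose_conjTranspose, inv_one, mul_one] at this
  rw [this, posSemidef_mul_conjTranspose_sub_conjTranspose_mul_iff]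

end Matrix

def blockEquiv (N : ℕ) : Fin 2 × Fin N ≃ Fin N ⊕ Fin N where
  toFun := blockIdx N
  invFun := Sum.elim (fun j => (0, j)) (fun j => (1, j))
  left_inv := by
    rintro ⟨a, j⟩
    fin_cases a <;> simp [blockIdx]
  right_inv := by
    rintro (j | j) <;> simp [blockIdx]

theorem posSemidef_submatrix_blockIdx_iff {N : ℕ} {R : Type*} [CommRing R] [PartialOrder R]
    [StarRing R] {M : Matrix (Fin N ⊕ Fin N) (Fin N ⊕ Fin N) R} :
    (M.submatrix (blockIdx N) (blockIdx N)).PosSemidef ↔ M.PosSemidef :=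
  posSemidef_submatrix_equiv (blockEquiv N)

theorem PTa_submatrix_fromBlocks {N : ℕ} (A B C D : Matrix (Fin N) (Fin N) ℂ) :
    PTa ((fromBlocks A B C D).submatrix (blockIdx N) (blockIdx N)) =
      (fromBlocks A C B D).submatrix (blockIdx N) (blockIdx N) := by
  ext ⟨a, i⟩ ⟨c, j⟩
  fin_cases a <;> fin_cases c <;> rfl

theorem sum_outer_kronecker_outer_apply {ι κ m : Type*} [Fintype κ] [DecidableEq κ]
    (x : κ → ι → ℂ) (U : Matrix m κ ℂ) (a c : ι) (i j : m) :
    (∑ k, outer (x k) ⊗ₖ outer (Uᵀ k)) (a, i) (c, j) =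
      (U * diagonal (fun k => x k a * star (x k c)) * Uᴴ) i j := by
  rw [Matrix.sum_apply, Matrix.mul_apply]
  refine Finset.sum_congr rfl fun k _ => ?_
  simp only [kroneckerMap_apply, outer, vecMulVec_apply, mul_diagonal, conjTranspose_apply,
    transpose_apply, Pi.star_apply]
  ring

theorem isKSep_of_eq_conj_diagonal {N : ℕ} {B : Matrix (Fin N) (Fin N) ℂ}
    (U : unitaryGroup (Fin N) ℂ) (d : Fin N → ℂ) (hB : B = conjStarAlgAut ℂ _ U (diagonal d)) :
    IsKSep 2 N N ((fromBlocks (B * Bᴴ) B Bᴴ 1).submatrix (blockIdx N) (blockIdx N)) := by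
  set φ := conjStarAlgAut ℂ (Matrix (Fin N) (Fin N) ℂ) U
  have hBH : Bᴴ = φ (diagonal (star d)) := by
    rw [hB, ← star_eq_conjTranspose, ← map_star, star_eq_conjTranspose, diagonal_conjTranspose]
  have hBBH : B * Bᴴ = φ (diagonal (d * star d)) := by
    rw [hBH, hB, ← map_mul, diagonal_mul_diagonal]
    rfl
  have h1 : (1 : Matrix (Fin N) (Fin N) ℂ) = φ (diagonal fun _ => 1) := by
    rw [diagonal_one, map_one]
  rw [hBBH, hBH, h1, hB]
  refine ⟨fun k => ![d k, 1], fun k => (U : Matrix (Fin N) (Fin N) ℂ)ᵀ k, ?_⟩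
  ext ⟨a, i⟩ ⟨c, j⟩
  rw [sum_outer_kronecker_outer_apply]
  change _ = φ _ i j
  fin_cases a <;> fin_cases c <;> simp [blockIdx, Pi.mul_def, Pi.star_def]

/-- For a rank-N canonical-form 2×N state ρ = [[BB†,B],[B†,I]], the partial
transpose ρ^{T_A} = [[BB†,B†],[B,I]] is positive semidefinite iff B is normal,
and in that case ρ is N-separable. -/
theorem rankN_ppt_iff_normal_and_separable (N : ℕ)
    (B : Matrix (Fin N) (Fin N) ℂ)
    (ρ : Matrix (Fin 2 × Fin N) (Fin 2 × Fin N) ℂ)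
    (hρ : ρ = (Matrix.fromBlocks (B * Bᴴ) B Bᴴ (1 : Matrix (Fin N) (Fin N) ℂ)).submatrix
      (blockIdx N) (blockIdx N)) :
    PTa ρ = (Matrix.fromBlocks (B * Bᴴ) Bᴴ B (1 : Matrix (Fin N) (Fin N) ℂ)).submatrix
      (blockIdx N) (blockIdx N) ∧
    ((PTa ρ).PosSemidef ↔ B * Bᴴ = Bᴴ * B) ∧
    (B * Bᴴ = Bᴴ * B → IsKSep 2 N N ρ) := by
  subst hρ
  refine ⟨PTa_submatrix_fromBlocks _ _ _ _, ?_, fun hB => ?_⟩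
  · rw [PTa_submatrix_fromBlocks, posSemidef_submatrix_blockIdx_iff,
      posSemidef_fromBlocks_mul_conjTranspose_iff]
  · obtain ⟨U, d, hUd⟩ := exists_unitary_eq_conj_diagonal_of_isStarNormal ⟨hB.symm⟩
    exact isKSep_of_eq_conj_diagonal U d hUd
end
end

section
/- Let ρ be a PPT state of a 2×4 system with rank ρ = 5 and rank ρ^{T_A} = 7. Then there exist nonzero vectors e ∈ ℂ² and f ∈ ℂ⁴ such that the product vector e ⊗ f lies in the range of ρ and conj(e) ⊗ f lies in the range of ρ^{T_A}, where conj(e) is the entrywise complex conjugate of e. -/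
/-!
The range of a matrix `M` is the orthogonal complement of `ker Mᴴ`, so with rank ρ = 5 and
rank ρ^{T_A} = 7 the two range conditions become three bilinear equations `eᵀ Aᵢ f = 0` and one
sesquilinear equation `e* B f = 0`. Thus `f ≠ 0` exists iff the 4×4 matrix `N(e)` with rows
`e* B, eᵀ A₁, eᵀ A₂, eᵀ A₃` is singular. Its determinant satisfies `F(a e) = conj a · a³ · F(e)`,
so in the chart `e = (1, t)` it behaves like `‖t‖² t² F(0, 1)` on large circles. If `F(1, ·)` had no
zero it would have a continuous logarithm on the simply connected plane, which is incompatible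
with winding number 2 along such a circle.
-/

open Matrix BigOperators
open scoped ComplexOrder

noncomputable section

namespace Matrix

variable {m n 𝕜 : Type*} [Fintype m] [Fintype n] [DecidableEq m] [DecidableEq n] [RCLike 𝕜]

theorem mem_range_mulVecLin_of_orthogonal_ker_conjTranspose (M : Matrix m n 𝕜) {x : m → 𝕜}
    (hx : ∀ v, Mᴴ *ᵥ v = 0 → star v ⬝ᵥ x = 0) : x ∈ LinearMap.range M.mulVecLin := by
  have hmem : WithLp.toLp 2 x ∈ (toEuclideanLin Mᴴ).kerᗮ := by
    rw [Submodule.mem_orthogonal]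
    intro u hu
    rw [EuclideanSpace.inner_eq_star_dotProduct, dotProduct_comm]
    exact hx _ (congrArg WithLp.ofLp hu)
  rw [LinearMap.orthogonal_ker, ← toEuclideanLin_conjTranspose_eq_adjoint,
    conjTranspose_conjTranspose] at hmem
  obtain ⟨y, hy⟩ := hmem
  exact ⟨WithLp.ofLp y, congrArg WithLp.ofLp hy⟩

theorem exists_forall_orthogonal_imp_mem_range_mulVecLin (M : Matrix m n 𝕜) {d : ℕ}
    (hd : M.rank + d = Fintype.card m) :
    ∃ k : Fin d → m → 𝕜, ∀ x, (∀ i, star (k i) ⬝ᵥ x = 0) → x ∈ LinearMap.range M.mulVecLin := by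
  have hker : Module.finrank 𝕜 (LinearMap.ker Mᴴ.mulVecLin) = d := by
    have := LinearMap.finrank_range_add_finrank_ker Mᴴ.mulVecLin
    rw [← Matrix.rank, rank_conjTranspose, Module.finrank_fintype_fun_eq_card] at this
    omega
  let b := Module.finBasisOfFinrankEq 𝕜 _ hker
  refine ⟨fun i => b i, fun x hx =>
    M.mem_range_mulVecLin_of_orthogonal_ker_conjTranspose fun v hv => ?_⟩
  have hv_sum : v = ∑ i, b.repr ⟨v, hv⟩ i • (b i : m → 𝕜) := by
    have := congrArg Subtype.val (b.sum_repr ⟨v, hv⟩).symm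
    rwa [Submodule.coe_sum] at this
  rw [hv_sum]
  simp [star_sum, sum_dotProduct, smul_dotProduct, hx]

theorem dotProduct_tmul {m n R : Type*} [Fintype m] [Fintype n] [CommSemiring R]
    (v : m × n → R) (e : m → R) (f : n → R) :
    v ⬝ᵥ (fun p => e p.1 * f p.2) = e ⬝ᵥ of (Function.curry v) *ᵥ f := by
  simp only [dotProduct, mulVec, Fintype.sum_prod_type, Finset.mul_sum, Function.curry, of_apply]
  refine Finset.sum_congr rfl fun _ _ => Finset.sum_congr rfl fun _ _ => by ring

end Matrix

namespace Complex

theorem exists_continuous_exp_eq {h : ℂ → ℂ} (hh : Continuous h) (h0 : ∀ t, h t ≠ 0) :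
    ∃ g : ℂ → ℂ, Continuous g ∧ ∀ t, exp (g t) = h t := by
  obtain ⟨g, -, hg⟩ := (isCoveringMapOn_exp.existsUnique_continuousMap_lifts ⟨h, hh⟩
    (a₀ := 0) (exp_log (h0 0)) h0).exists
  exact ⟨g, g.continuous, congrFun hg⟩

theorem eq_of_exp_eq_of_preconnected {X : Type*} [TopologicalSpace X]
    [PreconnectedSpace X] {u : X → ℂ} (hu : Continuous u) {x₀ : X}
    (hexp : ∀ x, exp (u x) = exp (u x₀)) (x : X) :
    u x = u x₀ := by
  have hmaps : Set.MapsTo (fun x => u x - u x₀) Set.univ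
      (AddSubgroup.zmultiples (2 * Real.pi * I) : Set ℂ) := by
    intro x _
    have h1 : exp (u x - u x₀) = 1 := by rw [exp_sub, hexp, div_self (exp_ne_zero _)]
    obtain ⟨k, hk⟩ := exp_eq_one_iff.mp h1
    exact ⟨k, by simpa [zsmul_eq_mul, mul_assoc] using hk.symm⟩
  have := isPreconnected_univ.constant_of_mapsTo
    (isDiscrete_iff_discreteTopology.mpr (NormedSpace.discreteTopology_zmultiples _))
    (hu.sub continuous_const).continuousOn hmaps (Set.mem_univ x) (Set.mem_univ x₀)
  simpa [sub_eq_zero] using this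

end Complex

open Complex

theorem exists_eq_zero_of_norm_sub_lt_on_circle {h : ℂ → ℂ} (hh : Continuous h) {c : ℂ} {n : ℕ}
    (hn : n ≠ 0) {R : ℝ} (hR : 0 ≤ R)
    (hlt : ∀ t : ℂ, ‖t‖ = R → ‖h t - c * t ^ n‖ < ‖c * t ^ n‖) : ∃ t, h t = 0 := by
  by_contra! h0
  obtain ⟨g, hg, hexp⟩ := exists_continuous_exp_eq hh h0
  set z : ℝ → ℂ := fun θ => R * exp (θ * I)
  have hz : Continuous z := by fun_prop
  have hz_norm : ∀ θ, ‖z θ‖ = R := fun θ => by simp [z, norm_exp_ofReal_mul_I, abs_of_nonneg hR]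
  set G : ℝ → ℂ := fun θ => h (z θ) / (c * z θ ^ n)
  have hG_ne : ∀ θ, c * z θ ^ n ≠ 0 := fun θ hzero => by
    simpa [hzero] using (norm_nonneg _).trans_lt (hlt _ (hz_norm θ))
  have hG_slit : ∀ θ, G θ ∈ slitPlane := fun θ => by
    have hlt1 : ‖G θ - 1‖ < 1 := by
      rw [div_sub_one (hG_ne θ), norm_div, div_lt_one (norm_pos_iff.mpr (hG_ne θ))]
      exact hlt _ (hz_norm θ)
    refine mem_slitPlane_iff.mpr (Or.inl ?_)
    have := (abs_re_le_norm (G θ - 1)).trans_lt hlt1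
    simp only [sub_re, one_re] at this
    linarith [abs_lt.mp this]
  -- `u` is a continuous logarithm of the constant `c * R ^ n`, but it drifts by `-2πin` per turn.
  set u : ℝ → ℂ := fun θ => g (z θ) - log (G θ) - n * θ * I
  have hu : Continuous u := by
    refine (hg.comp hz).sub ?_ |>.sub (by fun_prop)
    exact continuous_iff_continuousAt.mpr fun θ =>
      ((hh.comp hz).div (by fun_prop) hG_ne).continuousAt.clog (hG_slit θ)
  have hexp_u : ∀ θ, exp (u θ) = c * R ^ n := fun θ => by
    simp only [u, exp_sub, hexp, exp_log (div_ne_zero (h0 _) (hG_ne θ)), G, z]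
    rw [div_div_cancel₀ (h0 _), mul_assoc (n : ℂ), exp_nat_mul, mul_pow]
    field_simp [exp_ne_zero]
  have hperiod : u (2 * Real.pi) = u 0 - 2 * Real.pi * n * I := by
    have : z (2 * Real.pi) = z 0 := by simp [z, exp_two_pi_mul_I]
    simp only [u, this, G]
    push_cast
    ring
  have := eq_of_exp_eq_of_preconnected hu (x₀ := 0) (fun θ => by rw [hexp_u, hexp_u])
    (2 * Real.pi)
  rw [hperiod, sub_eq_self] at this
  simp [Real.pi_ne_zero, hn] at this

theorem exists_ne_zero_eq_zero_of_homogeneous {F : (Fin 2 → ℂ) → ℂ} (hF : Continuous F) {d : ℕ}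
    (hd : 2 ≤ d) (hhom : ∀ (a : ℂ) (e : Fin 2 → ℂ), F (a • e) = star a * a ^ d * F e) :
    ∃ e ≠ 0, F e = 0 := by
  by_cases h01 : F ![0, 1] = 0
  · exact ⟨![0, 1], by simp, h01⟩
  set φ : ℂ → ℂ := fun s => F ![s, 1]
  have hφ : Continuous φ := hF.comp (by fun_prop)
  obtain ⟨δ, hδ, hφδ⟩ := Metric.continuousAt_iff.mp hφ.continuousAt (‖φ 0‖) (norm_pos_iff.mpr h01)
  set R := 2 / δ
  have hR : 0 < R := by positivity
  -- On the circle `F (1, t) = conj t * t ^ d * φ t⁻¹ = R ^ 2 * t ^ (d - 1) * φ t⁻¹`.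
  have hcircle : ∀ t : ℂ, ‖t‖ = R →
      ‖F ![1, t] - R ^ 2 * φ 0 * t ^ (d - 1)‖ < ‖R ^ 2 * φ 0 * t ^ (d - 1)‖ := by
    intro t ht
    have ht0 : t ≠ 0 := norm_ne_zero_iff.mp (by rw [ht]; exact hR.ne')
    have hvec : ![1, t] = t • ![t⁻¹, 1] := by ext i; fin_cases i <;> simp [ht0]
    have hconj : star t * t ^ d = R ^ 2 * t ^ (d - 1) := by
      obtain ⟨k, rfl⟩ := Nat.exists_eq_add_of_le' (show 1 ≤ d by omega)
      rw [Nat.add_sub_cancel, pow_succ', ← mul_assoc, star_def, conj_mul', ht]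
    have hclose : ‖φ t⁻¹ - φ 0‖ < ‖φ 0‖ := by
      rw [← dist_eq_norm]
      refine hφδ ?_
      rw [dist_zero_right, norm_inv, ht, inv_div]
      linarith
    rw [hvec, hhom, hconj]
    calc ‖R ^ 2 * t ^ (d - 1) * φ t⁻¹ - R ^ 2 * φ 0 * t ^ (d - 1)‖
        = R ^ 2 * R ^ (d - 1) * ‖φ t⁻¹ - φ 0‖ := by
          rw [show (R : ℂ) ^ 2 * t ^ (d - 1) * φ t⁻¹ - R ^ 2 * φ 0 * t ^ (d - 1)
            = R ^ 2 * t ^ (d - 1) * (φ t⁻¹ - φ 0) by ring]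
          simp [ht, abs_of_pos hR]
      _ < R ^ 2 * R ^ (d - 1) * ‖φ 0‖ := by gcongr
      _ = ‖R ^ 2 * φ 0 * t ^ (d - 1)‖ := by
          simp only [norm_mul, norm_pow, norm_real, Real.norm_eq_abs, abs_of_pos hR, ht]
          ring
  obtain ⟨t, ht⟩ := exists_eq_zero_of_norm_sub_lt_on_circle (h := fun t => F ![1, t])
    (hF.comp (by fun_prop)) (by omega) hR.le hcircle
  exact ⟨![1, t], by simp, ht⟩

theorem exists_common_zero_bilinear_sesquilinear {n : ℕ} (hn : 2 ≤ n)
    (A : Fin n → Matrix (Fin 2) (Fin (n + 1)) ℂ) (B : Matrix (Fin 2) (Fin (n + 1)) ℂ) :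
    ∃ e f, e ≠ 0 ∧ f ≠ 0 ∧ (∀ i, e ⬝ᵥ A i *ᵥ f = 0) ∧ star e ⬝ᵥ B *ᵥ f = 0 := by
  let N : (Fin 2 → ℂ) → Matrix (Fin (n + 1)) (Fin (n + 1)) ℂ := fun e =>
    of (Fin.cons (star e ᵥ* B) fun i => e ᵥ* A i)
  have hN_smul : ∀ (a : ℂ) e, N (a • e) = diagonal (Fin.cons (star a) fun _ => a) * N e := by
    intro a e
    ext r j
    refine Fin.cases ?_ (fun i => ?_) r <;> simp [N, star_smul, smul_vecMul]
  have hdet : ∀ (a : ℂ) e, (N (a • e)).det = star a * a ^ n * (N e).det := by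
    intro a e
    rw [hN_smul, det_mul, det_diagonal, Fin.prod_univ_succ]
    simp
  have hcont : Continuous fun e => (N e).det := by
    refine Continuous.matrix_det (continuous_matrix fun r j => ?_)
    refine Fin.cases ?_ (fun i => ?_) r <;>
      simp only [N, of_apply, Fin.cons_zero, Fin.cons_succ, vecMul, dotProduct, Pi.star_apply] <;>
      fun_prop
  obtain ⟨e, he, hNe⟩ := exists_ne_zero_eq_zero_of_homogeneous hcont hn hdet
  obtain ⟨f, hf, hNf⟩ := exists_mulVec_eq_zero_iff.mpr hNe
  refine ⟨e, f, he, hf, fun i => ?_, ?_⟩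
  · rw [dotProduct_mulVec]; exact congrFun hNf i.succ
  · rw [dotProduct_mulVec]; exact congrFun hNf 0

theorem rank57_product_vector_in_range_general
    (ρ : Matrix (Fin 2 × Fin 4) (Fin 2 × Fin 4) ℂ)
    (hrank : ρ.rank = 5) (hrankT : (PTa ρ).rank = 7) :
    ∃ (e : Fin 2 → ℂ) (f : Fin 4 → ℂ), e ≠ 0 ∧ f ≠ 0 ∧
      (fun p : Fin 2 × Fin 4 => e p.1 * f p.2) ∈ LinearMap.range ρ.mulVecLin ∧
      (fun p : Fin 2 × Fin 4 => star e p.1 * f p.2) ∈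
        LinearMap.range (PTa ρ).mulVecLin := by
  obtain ⟨k, hk⟩ := ρ.exists_forall_orthogonal_imp_mem_range_mulVecLin (d := 3) (by simp [hrank])
  obtain ⟨w, hw⟩ := (PTa ρ).exists_forall_orthogonal_imp_mem_range_mulVecLin (d := 1)
    (by simp [hrankT])
  obtain ⟨e, f, he, hf, hek, hew⟩ := exists_common_zero_bilinear_sesquilinear (n := 3) (by norm_num)
    (fun i => of (Function.curry (star (k i)))) (of (Function.curry (star (w 0))))
  refine ⟨e, f, he, hf, hk _ fun i => ?_, hw _ fun i => ?_⟩
  · rw [dotProduct_tmul]; exact hek i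
  · rw [Subsingleton.elim i 0, dotProduct_tmul]; exact hew

/-- For a PPT 2×4 state with rank ρ = 5 and rank ρ^{T_A} = 7 there exists a
product vector e ⊗ f in the range of ρ such that conj(e) ⊗ f is in the range
of ρ^{T_A}. -/
theorem rank57_product_vector_in_range
    (ρ : Matrix (Fin 2 × Fin 4) (Fin 2 × Fin 4) ℂ)
    (hρ : ρ.PosSemidef) (hρT : (PTa ρ).PosSemidef)
    (hrank : ρ.rank = 5) (hrankT : (PTa ρ).rank = 7) :
    ∃ (e : Fin 2 → ℂ) (f : Fin 4 → ℂ), e ≠ 0 ∧ f ≠ 0 ∧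
      (fun p : Fin 2 × Fin 4 => e p.1 * f p.2) ∈ LinearMap.range ρ.mulVecLin ∧
      (fun p : Fin 2 × Fin 4 => star e p.1 * f p.2) ∈
        LinearMap.range (PTa ρ).mulVecLin :=
  rank57_product_vector_in_range_general ρ hrank hrankT
end
end

section
/- Fix b with 0 < b < 1. Let B be the 4×4 complex matrix with B_{12} = B_{23} = B_{33} = 1 and all other entries 0, and let Λ = (√((1−b)/(2b)), 0, 0, √((1+b)/(2b)))ᵀ and Λ̃ = (√((1+b)/(2b)), 0, 0, √((1−b)/(2b)))ᵀ ∈ ℂ⁴ (the data of Horodecki's 2×4 state ρ_97). Then there is no complex number s satisfying (B − s I₄) Λ̃ = (B† − conj(s) I₄) Λ; consequently the 5×5 matrix [[B, Λ],[Λ̃†, s]] is not normal for any s ∈ ℂ. -/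
/-!
The off-diagonal block of the normality equation for `[[B, Λ], [Λ̃†, s]]` is exactly
`(B − s) Λ̃ = (B† − s̄) Λ`. For Horodecki's data its coordinate 1 (indices from 0) reads
`Λ̃₂ − s Λ̃₁ = Λ₀ − s̄ Λ₁`, i.e. `0 = √((1 − b)/(2b))`, which is impossible for `0 < b < 1`.
-/

open Matrix BigOperators ComplexConjugate
open scoped ComplexOrder

noncomputable section

/-- A square complex matrix is normal if it commutes with its conjugate transpose. -/
def Matrix.IsNormal {n : Type*} [Fintype n] (A : Matrix n n ℂ) : Prop :=
  A * Aᴴ = Aᴴ * A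

theorem Matrix.IsNormal.sub_smul_one_mulVec_eq {n : Type*} [Fintype n] [DecidableEq n]
    {B : Matrix n n ℂ} {Λ Λt : n → ℂ} {s : ℂ}
    (h : (fromBlocks B (of fun j (_ : Fin 1) => Λ j) (of fun (_ : Fin 1) j => conj (Λt j))
      (of fun (_ : Fin 1) (_ : Fin 1) => s)).IsNormal) :
    (B - s • 1) *ᵥ Λt = (Bᴴ - conj s • 1) *ᵥ Λ := by
  ext i
  have corner := congrFun (congrFun h (Sum.inl i)) (Sum.inr 0)
  simp [fromBlocks_conjTranspose, mul_apply] at corner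
  simp only [sub_mulVec, smul_mulVec, one_mulVec, Pi.sub_apply, Pi.smul_apply, smul_eq_mul]
  simp only [mulVec, dotProduct, conjTranspose_apply, RCLike.star_def]
  linear_combination corner

def horodeckiB : Matrix (Fin 4) (Fin 4) ℂ :=
  of fun i j => if (i = 0 ∧ j = 1) ∨ (i = 1 ∧ j = 2) ∨ (i = 2 ∧ j = 2) then 1 else 0

theorem horodeckiB_sub_smul_one_mulVec_one (s : ℂ) (v : Fin 4 → ℂ) :
    ((horodeckiB - s • 1) *ᵥ v) 1 = v 2 - s * v 1 := by
  simp [horodeckiB, mulVec, dotProduct, Fin.sum_univ_four, sub_eq_neg_add]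

theorem horodeckiB_conjTranspose_sub_smul_one_mulVec_one (s : ℂ) (v : Fin 4 → ℂ) :
    ((horodeckiBᴴ - s • 1) *ᵥ v) 1 = v 0 - s * v 1 := by
  simp [horodeckiB, mulVec, dotProduct, Fin.sum_univ_four, sub_eq_add_neg]

theorem horodeckiB_sub_smul_one_mulVec_ne {Λ Λt : Fin 4 → ℂ} (hΛ₀ : Λ 0 ≠ 0) (hΛ₁ : Λ 1 = 0)
    (hΛt₁ : Λt 1 = 0) (hΛt₂ : Λt 2 = 0) (s : ℂ) :
    (horodeckiB - s • 1) *ᵥ Λt ≠ (horodeckiBᴴ - conj s • 1) *ᵥ Λ := by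
  intro h
  have h₁ := congrFun h 1
  rw [horodeckiB_sub_smul_one_mulVec_one, horodeckiB_conjTranspose_sub_smul_one_mulVec_one,
    hΛ₁, hΛt₁, hΛt₂] at h₁
  exact hΛ₀ (by simpa using h₁.symm)

/-- For the data (B, Λ, Λ̃) of Horodecki's 2×4 state ρ_97 with 0 < b < 1, there
is no s ∈ ℂ with (B − s)Λ̃ = (B† − s̄)Λ; consequently the 5×5 block matrix
[[B, Λ],[Λ̃†, s]] is not normal for any s ∈ ℂ. -/
theorem horodecki97_no_normal_extension (b : ℝ) (hb0 : 0 < b) (hb1 : b < 1)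
    (B : Matrix (Fin 4) (Fin 4) ℂ)
    (hB : B = Matrix.of fun i j =>
      if (i = 0 ∧ j = 1) ∨ (i = 1 ∧ j = 2) ∨ (i = 2 ∧ j = 2) then 1 else 0)
    (Λ Λt : Fin 4 → ℂ)
    (hΛ : Λ = ![(Real.sqrt ((1 - b) / (2 * b)) : ℂ), 0, 0,
      (Real.sqrt ((1 + b) / (2 * b)) : ℂ)])
    (hΛt : Λt = ![(Real.sqrt ((1 + b) / (2 * b)) : ℂ), 0, 0,
      (Real.sqrt ((1 - b) / (2 * b)) : ℂ)]) :
    (¬ ∃ s : ℂ, (B - s • (1 : Matrix (Fin 4) (Fin 4) ℂ)).mulVec Λt =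
        (Bᴴ - (conj s) • (1 : Matrix (Fin 4) (Fin 4) ℂ)).mulVec Λ) ∧
    (∀ s : ℂ, ¬ (Matrix.fromBlocks B
        (Matrix.of fun j (_ : Fin 1) => Λ j)
        (Matrix.of fun (_ : Fin 1) j => conj (Λt j))
        (Matrix.of fun (_ : Fin 1) (_ : Fin 1) => s)).IsNormal) := by
  obtain rfl : B = horodeckiB := hB
  have hΛ₀ : Λ 0 ≠ 0 := by
    have : 0 < Real.sqrt ((1 - b) / (2 * b)) :=
      Real.sqrt_pos.2 (div_pos (by linarith) (by linarith))
    simpa [hΛ] using this.ne'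
  have hcompat := horodeckiB_sub_smul_one_mulVec_ne (Λt := Λt) hΛ₀ (by simp [hΛ])
    (by simp [hΛt]) (by simp [hΛt])
  exact ⟨fun ⟨s, hs⟩ => hcompat s hs, fun s hN => hcompat s hN.sub_smul_one_mulVec_eq⟩
end
end

section
/- Let ρ be a square complex matrix with ρ = Σ_{l=1}^r Ψ_l Ψ_l† where the vectors Ψ_1, …, Ψ_r are linearly independent, and suppose ρ = Σ_{n=1}^K Φ_n Φ_n† is another decomposition into K ≥ r rank-one terms. Then there exists a K×r complex matrix W with W†W = I_r such that Φ_n = Σ_{l=1}^r W_{nl} Ψ_l for all n = 1, …, K. -/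
/-!
Let `X` and `Y` be the matrices whose rows are the `Ψ l` and the `Φ n`. The two decompositions of
`ρ` say exactly that `Xᴴ * X = Yᴴ * Y`. Independence of the rows of `X` gives a right inverse `S`,
and `W := Y * S` works: `Wᴴ * W = Sᴴ * Xᴴ * X * S = 1`, and `Y * (1 - S * X) = 0` because
`Yᴴ * Y * (1 - S * X) = Xᴴ * (X - X * S * X) = 0`.
-/

open Matrix BigOperators
open scoped ComplexOrder

noncomputable section

namespace Matrix

variable {k m n R : Type*} [Fintype m] [Fintype n] [DecidableEq m]

theorem exists_mul_eq_one_of_linearIndependent_row [Field R] {X : Matrix m n R}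
    (hX : LinearIndependent R X.row) : ∃ S : Matrix n m R, X * S = 1 := by
  rw [← mulVec_surjective_iff_exists_right_inverse, ← coe_mulVecLin, ← LinearMap.range_eq_top]
  apply Submodule.eq_top_of_finrank_eq
  rw [← rank, hX.rank_matrix, Module.finrank_fintype_fun_eq_card]

variable [Fintype k] {X : Matrix m n R} {Y : Matrix k n R} {S : Matrix n m R}

theorem eq_mul_mul_of_conjTranspose_mul_self_eq [DecidableEq n] [PartialOrder R] [Ring R]
    [StarRing R] [StarOrderedRing R] [NoZeroDivisors R]
    (hS : X * S = 1) (h : Xᴴ * X = Yᴴ * Y) : Y = Y * S * X := by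
  have hX : X * (1 - S * X) = 0 := by
    rw [Matrix.mul_sub, Matrix.mul_one, ← Matrix.mul_assoc, hS, Matrix.one_mul, sub_self]
  have hY : Y * (1 - S * X) = 0 := by
    rw [← conjTranspose_mul_self_mul_eq_zero, ← h, Matrix.mul_assoc, hX, Matrix.mul_zero]
  rwa [Matrix.mul_sub, Matrix.mul_one, sub_eq_zero, ← Matrix.mul_assoc] at hY

theorem conjTranspose_mul_self_eq_one_of_conjTranspose_mul_self_eq [Ring R] [StarRing R]
    (hS : X * S = 1) (h : Xᴴ * X = Yᴴ * Y) : (Y * S)ᴴ * (Y * S) = 1 :=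
  calc (Y * S)ᴴ * (Y * S) = Sᴴ * (Yᴴ * Y) * S := by
        simp only [conjTranspose_mul, Matrix.mul_assoc]
    _ = (X * S)ᴴ * (X * S) := by
        simp only [← h, conjTranspose_mul, Matrix.mul_assoc]
    _ = 1 := by rw [hS, conjTranspose_one, Matrix.mul_one]

theorem exists_isometry_mul_eq_of_conjTranspose_mul_self_eq_s18 [DecidableEq n] [PartialOrder R]
    [Ring R] [StarRing R] [StarOrderedRing R] [NoZeroDivisors R]
    (hS : X * S = 1) (h : Xᴴ * X = Yᴴ * Y) : ∃ W : Matrix k m R, Wᴴ * W = 1 ∧ Y = W * X :=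
  ⟨Y * S, conjTranspose_mul_self_eq_one_of_conjTranspose_mul_self_eq hS h,
    eq_mul_mul_of_conjTranspose_mul_self_eq hS h⟩

end Matrix

theorem sum_outer_eq_transpose_conjTranspose_mul_self {ι κ : Type*} [Fintype ι]
    (Ψ : ι → κ → ℂ) : ∑ l, outer (Ψ l) = ((of Ψ)ᴴ * of Ψ)ᵀ := by
  ext i j
  simp [outer, Matrix.sum_apply, mul_apply, vecMulVec_apply, mul_comm]

theorem decompositions_related_by_isometry_general (d r K : ℕ)
    (ρ : Matrix (Fin d) (Fin d) ℂ)
    (Ψ : Fin r → Fin d → ℂ) (hΨ : LinearIndependent ℂ Ψ)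
    (hρ : ρ = ∑ l : Fin r, outer (Ψ l))
    (Φ : Fin K → Fin d → ℂ) (hρ' : ρ = ∑ n : Fin K, outer (Φ n)) :
    ∃ W : Matrix (Fin K) (Fin r) ℂ,
      Wᴴ * W = 1 ∧ ∀ n, Φ n = ∑ l : Fin r, W n l • Ψ l := by
  obtain ⟨S, hS⟩ := exists_mul_eq_one_of_linearIndependent_row (X := of Ψ) hΨ
  have hGram : (of Ψ)ᴴ * of Ψ = (of Φ)ᴴ * of Φ := by
    apply transpose_injective
    rw [← sum_outer_eq_transpose_conjTranspose_mul_self,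
      ← sum_outer_eq_transpose_conjTranspose_mul_self, ← hρ, ← hρ']
  obtain ⟨W, hW, hΦ⟩ := exists_isometry_mul_eq_of_conjTranspose_mul_self_eq_s18 hS hGram
  refine ⟨W, hW, fun n => funext fun i => ?_⟩
  simpa [mul_apply, Finset.sum_apply] using congrFun₂ hΦ n i

/-- If ρ = Σ_l Ψ_l Ψ_l† with the Ψ_l linearly independent and
ρ = Σ_n Φ_n Φ_n† is another decomposition into K ≥ r rank-one terms, then
there is a K×r matrix W with W†W = 1 and Φ_n = Σ_l W_{nl} Ψ_l. -/
theorem decompositions_related_by_isometry (d r K : ℕ) (hK : r ≤ K)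
    (ρ : Matrix (Fin d) (Fin d) ℂ)
    (Ψ : Fin r → Fin d → ℂ) (hΨ : LinearIndependent ℂ Ψ)
    (hρ : ρ = ∑ l : Fin r, outer (Ψ l))
    (Φ : Fin K → Fin d → ℂ) (hρ' : ρ = ∑ n : Fin K, outer (Φ n)) :
    ∃ W : Matrix (Fin K) (Fin r) ℂ,
      Wᴴ * W = 1 ∧ ∀ n, Φ n = ∑ l : Fin r, W n l • Ψ l :=
  decompositions_related_by_isometry_general d r K ρ Ψ hΨ hρ Φ hρ'
end
end
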